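/- arXiv:1911.10187 — 3 statements merged into one kernel-verified Lean document; each statement's English description precedes it below -/
import Mathlib

section
/- Let μ_x(y) be the relative margin defined by the recursion: μ_x(ε) = ρ(x), μ_x(y1) = μ_x(y) + 1, and μ_x(y0) = 0 if ρ(xy) > μ_x(y) = 0, otherwise μ_x(y) − 1, where ρ is the reach function. Then μ_x(y) is monotone in both arguments with respect to the coordinatewise partial order: if x ≤ x′ and y ≤ y′ (strings of matching lengths), then μ_x(y) ≤ μ_{x′}(y′). -/
/-!
Both `ρ` and `μ_x` are computed by appending one bit at a time, so everything is an induction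
along two lists of equal length growing in parallel. Each update is monotone in the previous
value and in the appended bit. For `ρ` this uses `ρ ≥ 0` (a `0`-step reaches at most
`max (ρ - 1) 0 ≤ ρ' + 1`); for `μ` the reset to `0` is harmless because the reset condition
`ρ(xy) > 0 = μ_x(y)` is inherited by the larger pair whenever `μ_{x'}(y') = 0`, as `ρ` is monotone.
-/

@[elab_as_elim]
theorem List.Forall₂.snoc_induction {α β : Type*} {R : α → β → Prop}
    {motive : List α → List β → Prop} (nil : motive [] [])
    (snoc : ∀ {l m a b}, R a b → Forall₂ R l m → motive l m → motive (l ++ [a]) (m ++ [b]))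
    {l : List α} {m : List β} (h : Forall₂ R l m) : motive l m := by
  suffices key : ∀ {l' m'}, Forall₂ R l' m' → motive l'.reverse m'.reverse by
    simpa using key (forall₂_reverse_iff.mpr h)
  intro l' m' h'
  induction h' with
  | nil => exact nil
  | cons hab _ ih =>
    rw [reverse_cons, reverse_cons]
    exact snoc hab (forall₂_reverse_iff.mpr ‹_›) ih

section Reach

variable {ρ : List Bool → ℤ} (hρ_nil : ρ [] = 0)
  (hρ_one : ∀ w : List Bool, ρ (w ++ [true]) = ρ w + 1)
  (hρ_zero : ∀ w : List Bool, ρ (w ++ [false]) = if 0 < ρ w then ρ w - 1 else 0)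
include hρ_nil hρ_one hρ_zero

theorem reach_nonneg (w : List Bool) : 0 ≤ ρ w := by
  induction w using List.reverseRecOn with
  | nil => exact hρ_nil.ge
  | append_singleton w a ih =>
    cases a
    · rw [hρ_zero]; split_ifs <;> omega
    · rw [hρ_one]; omega

theorem reach_mono {w w' : List Bool} (h : List.Forall₂ (· ≤ ·) w w') : ρ w ≤ ρ w' := by
  refine h.snoc_induction le_rfl fun {w w' a b} hab _ ih => ?_
  have hw' := reach_nonneg hρ_nil hρ_one hρ_zero w'
  cases a <;> cases b
  · rw [hρ_zero, hρ_zero]; split_ifs <;> omega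
  · rw [hρ_zero, hρ_one]; split_ifs <;> omega
  · exact absurd hab (by decide)
  · rw [hρ_one, hρ_one]; omega

end Reach

theorem margin_mono {ρ : List Bool → ℤ} {μ : List Bool → List Bool → ℤ}
    (hρ_mono : ∀ w w' : List Bool, List.Forall₂ (· ≤ ·) w w' → ρ w ≤ ρ w')
    (hμ_nil : ∀ x : List Bool, μ x [] = ρ x)
    (hμ_one : ∀ x y : List Bool, μ x (y ++ [true]) = μ x y + 1)
    (hμ_zero : ∀ x y : List Bool,
      μ x (y ++ [false]) = if 0 < ρ (x ++ y) ∧ μ x y = 0 then 0 else μ x y - 1)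
    {x x' y y' : List Bool} (hx : List.Forall₂ (· ≤ ·) x x')
    (hy : List.Forall₂ (· ≤ ·) y y') : μ x y ≤ μ x' y' := by
  refine hy.snoc_induction (by rw [hμ_nil, hμ_nil]; exact hρ_mono x x' hx)
    fun {y y' a b} hab hyy' ih => ?_
  have hρ := hρ_mono (x ++ y) (x' ++ y') (List.rel_append hx hyy')
  cases a <;> cases b
  · rw [hμ_zero, hμ_zero]; split_ifs <;> omega
  · rw [hμ_zero, hμ_one]; split_ifs <;> omega
  · exact absurd hab (by decide)
  · rw [hμ_one, hμ_one]; omega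

/-- The relative margin `μ_x(y)` is monotone in both arguments with respect to the
coordinatewise partial order: `x ≤ x'` and `y ≤ y'` imply `μ_x(y) ≤ μ_{x'}(y')`. -/
theorem relative_margin_monotone
    (ρ : List Bool → ℤ) (μ : List Bool → List Bool → ℤ)
    (hρ_nil : ρ [] = 0)
    (hρ_one : ∀ w : List Bool, ρ (w ++ [true]) = ρ w + 1)
    (hρ_zero : ∀ w : List Bool, ρ (w ++ [false]) = if 0 < ρ w then ρ w - 1 else 0)
    (hμ_nil : ∀ x : List Bool, μ x [] = ρ x)
    (hμ_one : ∀ x y : List Bool, μ x (y ++ [true]) = μ x y + 1)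
    (hμ_zero : ∀ x y : List Bool,
      μ x (y ++ [false]) = if 0 < ρ (x ++ y) ∧ μ x y = 0 then 0 else μ x y - 1) :
    ∀ x x' y y' : List Bool,
      List.Forall₂ (· ≤ ·) x x' → List.Forall₂ (· ≤ ·) y y' → μ x y ≤ μ x' y' :=
  fun _ _ _ _ hx hy => margin_mono (fun _ _ => reach_mono hρ_nil hρ_one hρ_zero)
    hμ_nil hμ_one hμ_zero hx hy
end

section
/- Let ρ_n denote the distribution on nonnegative integers of ρ(B_1,...,B_n), where the B_i are i.i.d. Bernoulli with success probability p = (1−ε)/2 and ρ is the reach function (biased walk on ℤ_{≥0} reflected at 0: each 1 steps +1, each 0 steps −1 clipped at 0). Let π be the distribution π(k) = (2ε/(1+ε))·((1−ε)/(1+ε))^k. Then for every n, ρ_n is stochastically dominated by π: for every K ≥ 0, P[ρ(B_1,...,B_n) ≥ K] ≤ Σ_{k ≥ K} π(k). -/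
open Classical

section Aux

variable (ε : ℝ)

/-- weight of one bit -/
noncomputable def reachW (b : Bool) : ℝ := if b then (1 - ε) / 2 else (1 + ε) / 2

/-- probability that the reach is at least `K` after `n` steps -/
noncomputable def reachG (ρ : List Bool → ℤ) (n : ℕ) (K : ℤ) : ℝ :=
  ∑ x : Fin n → Bool,
    if K ≤ ρ (List.ofFn x) then ∏ i, reachW ε (x i) else 0

lemma reachW_nonneg (hε1 : ε < 1) (hε0 : 0 < ε) (b : Bool) : 0 ≤ reachW ε b := by
  cases b <;> simp [reachW] <;> linarith

lemma reach_nonneg_s10 (ρ : List Bool → ℤ) (h_nil : ρ [] = 0)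
    (h_one : ∀ w, ρ (w ++ [true]) = ρ w + 1)
    (h_zero : ∀ w, ρ (w ++ [false]) = if 0 < ρ w then ρ w - 1 else 0) :
    ∀ w, 0 ≤ ρ w := by
  intro w
  induction w using List.reverseRecOn with
  | nil => simp [h_nil]
  | append_singleton w b ih =>
    cases b
    · rw [h_zero]; split <;> omega
    · rw [h_one]; omega

lemma reachW_sum : reachW ε true + reachW ε false = 1 := by
  simp [reachW]; ring

lemma sum_weights (n : ℕ) :
    ∑ x : Fin n → Bool, ∏ i, reachW ε (x i) = 1 := by
  have := Finset.prod_univ_sum (fun _ : Fin n => (Finset.univ : Finset Bool))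
    (fun _ b => reachW ε b)
  rw [Fintype.piFinset_univ] at this
  rw [← this]
  have h1 : ∑ b : Bool, reachW ε b = 1 := by
    rw [Fintype.sum_bool]; exact reachW_sum ε
  rw [Finset.prod_congr rfl fun i _ => h1]
  simp

lemma reachG_le_one (hε1 : ε < 1) (hε0 : 0 < ε) (ρ : List Bool → ℤ) (n : ℕ) (K : ℤ) :
    reachG ε ρ n K ≤ 1 := by
  rw [← sum_weights ε n]
  apply Finset.sum_le_sum
  intro x _
  split
  · exact le_rfl
  · exact Finset.prod_nonneg fun i _ => reachW_nonneg ε hε1 hε0 (x i)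

/-- the recursion for `reachG` -/
lemma reachG_succ (ρ : List Bool → ℤ)
    (h_one : ∀ w, ρ (w ++ [true]) = ρ w + 1)
    (h_zero : ∀ w, ρ (w ++ [false]) = if 0 < ρ w then ρ w - 1 else 0)
    (hnn : ∀ w, 0 ≤ ρ w)
    (n : ℕ) (K : ℤ) (hK : 1 ≤ K) :
    reachG ε ρ (n + 1) K
      = reachW ε true * reachG ε ρ n (K - 1) + reachW ε false * reachG ε ρ n (K + 1) := by
  unfold reachG
  rw [← Fintype.sum_equiv (Fin.snocEquiv (fun _ : Fin (n+1) => Bool))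
      _ (fun f => if K ≤ ρ (List.ofFn f) then ∏ i, reachW ε (f i) else 0) (fun _ => rfl)]
  rw [Fintype.sum_prod_type, Fintype.sum_bool]
  have hofn : ∀ (b : Bool) (y : Fin n → Bool),
      List.ofFn (Fin.snocEquiv (fun _ : Fin (n+1) => Bool) (b, y)) = List.ofFn y ++ [b] := by
    intro b y
    rw [List.ofFn_succ']
    simp [Fin.snocEquiv, List.concat_eq_append]
  have hprod : ∀ (b : Bool) (y : Fin n → Bool),
      ∏ i, reachW ε ((Fin.snocEquiv (fun _ : Fin (n+1) => Bool) (b, y)) i)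
        = reachW ε b * ∏ i, reachW ε (y i) := by
    intro b y
    rw [Fin.prod_univ_castSucc]
    simp [Fin.snocEquiv, mul_comm]
  simp only [hofn, hprod]
  rw [Finset.mul_sum, Finset.mul_sum]
  refine congrArg₂ (· + ·) (Finset.sum_congr rfl fun y _ => ?_)
    (Finset.sum_congr rfl fun y _ => ?_)
  · rw [mul_ite, mul_zero, h_one]
    exact if_congr (by omega) rfl rfl
  · rw [mul_ite, mul_zero, h_zero]
    refine if_congr ?_ rfl rfl
    split <;> omega

lemma reachG_bound (hε0 : 0 < ε) (hε1 : ε < 1) (ρ : List Bool → ℤ)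
    (h_nil : ρ [] = 0)
    (h_one : ∀ w, ρ (w ++ [true]) = ρ w + 1)
    (h_zero : ∀ w, ρ (w ++ [false]) = if 0 < ρ w then ρ w - 1 else 0) :
    ∀ n, ∀ K : ℕ, reachG ε ρ n K ≤ ((1 - ε) / (1 + ε)) ^ K := by
  have hnn := reach_nonneg_s10 ρ h_nil h_one h_zero
  have hq0 : (0:ℝ) ≤ (1 - ε) / (1 + ε) := by
    apply div_nonneg <;> linarith
  intro n
  induction n with
  | zero =>
    intro K
    cases K with
    | zero =>
      simp only [Nat.cast_zero, pow_zero]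
      exact reachG_le_one ε hε1 hε0 ρ 0 0
    | succ K =>
      unfold reachG
      rw [Finset.sum_eq_zero]
      · positivity
      · intro x _
        have hx : List.ofFn x = [] := by simp
        rw [hx, if_neg]
        rw [h_nil]; push_cast; omega
  | succ n ih =>
    intro K
    cases K with
    | zero =>
      simp only [Nat.cast_zero, pow_zero]
      exact reachG_le_one ε hε1 hε0 ρ (n+1) 0
    | succ K =>
      have hK : (1:ℤ) ≤ ((K + 1 : ℕ) : ℤ) := by push_cast; omega
      rw [reachG_succ ε ρ h_one h_zero hnn n _ hK]
      have e1 : ((K + 1 : ℕ) : ℤ) - 1 = (K : ℤ) := by push_cast; ring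
      have e2 : ((K + 1 : ℕ) : ℤ) + 1 = ((K + 2 : ℕ) : ℤ) := by push_cast; ring
      rw [e1, e2]
      have b1 := ih K
      have b2 := ih (K + 2)
      have hw1 : reachW ε true = (1 - ε) / 2 := by simp [reachW]
      have hw2 : reachW ε false = (1 + ε) / 2 := by simp [reachW]
      rw [hw1, hw2]
      have h1e : (0:ℝ) < 1 + ε := by linarith
      calc (1 - ε) / 2 * reachG ε ρ n K + (1 + ε) / 2 * reachG ε ρ n (K + 2)
          ≤ (1 - ε) / 2 * ((1 - ε) / (1 + ε)) ^ K
            + (1 + ε) / 2 * ((1 - ε) / (1 + ε)) ^ (K + 2) := by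
            apply add_le_add
            · apply mul_le_mul_of_nonneg_left b1; linarith
            · apply mul_le_mul_of_nonneg_left b2; linarith
        _ = ((1 - ε) / (1 + ε)) ^ K
              * ((1 - ε) / 2 + (1 + ε) / 2 * ((1 - ε) / (1 + ε) * ((1 - ε) / (1 + ε)))) := by
            rw [pow_add]; ring
        _ = ((1 - ε) / (1 + ε)) ^ (K + 1) := by
            have key : (1 - ε) / 2 + (1 + ε) / 2 * ((1 - ε) / (1 + ε) * ((1 - ε) / (1 + ε)))
                = (1 - ε) / (1 + ε) := by
              field_simp
              ring
            rw [key, pow_succ]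

end Aux

/-- The reach `ρ(B_1,…,B_n)` of an i.i.d. Bernoulli((1−ε)/2) string is stochastically
dominated by the distribution `π(k) = (2ε/(1+ε))·((1−ε)/(1+ε))^k`: for every `K`,
`P[ρ(B) ≥ K] ≤ Σ_{k ≥ K} π(k)`. -/
theorem reach_dominated_by_stationary
    (ε : ℝ) (hε0 : 0 < ε) (hε1 : ε < 1)
    (ρ : List Bool → ℤ)
    (h_nil : ρ [] = 0)
    (h_one : ∀ w : List Bool, ρ (w ++ [true]) = ρ w + 1)
    (h_zero : ∀ w : List Bool, ρ (w ++ [false]) = if 0 < ρ w then ρ w - 1 else 0)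
    (n : ℕ) :
    ∀ K : ℕ,
      (∑ x ∈ Finset.univ.filter (fun x : Fin n → Bool => (K : ℤ) ≤ ρ (List.ofFn x)),
          ∏ i : Fin n, (if x i then (1 - ε) / 2 else (1 + ε) / 2))
        ≤ ∑' j : ℕ, (2 * ε / (1 + ε)) * ((1 - ε) / (1 + ε)) ^ (K + j) := by
  intro K
  have h1e : (0:ℝ) < 1 + ε := by linarith
  have hq0 : (0:ℝ) ≤ (1 - ε) / (1 + ε) := by
    apply div_nonneg <;> linarith
  have hq1 : (1 - ε) / (1 + ε) < 1 := by
    rw [div_lt_one h1e]; linarith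
  -- compute the RHS
  have hrhs : (∑' j : ℕ, (2 * ε / (1 + ε)) * ((1 - ε) / (1 + ε)) ^ (K + j))
      = ((1 - ε) / (1 + ε)) ^ K := by
    have : ∀ j : ℕ, (2 * ε / (1 + ε)) * ((1 - ε) / (1 + ε)) ^ (K + j)
        = (2 * ε / (1 + ε)) * ((1 - ε) / (1 + ε)) ^ K * ((1 - ε) / (1 + ε)) ^ j := by
      intro j; rw [pow_add]; ring
    rw [tsum_congr this, tsum_mul_left, tsum_geometric_of_lt_one hq0 hq1]
    rw [eq_comm]
    have h2 : 1 - (1 - ε) / (1 + ε) = 2 * ε / (1 + ε) := by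
      field_simp; ring
    rw [h2]
    field_simp
  rw [hrhs]
  have hlhs : (∑ x ∈ Finset.univ.filter (fun x : Fin n → Bool => (K : ℤ) ≤ ρ (List.ofFn x)),
          ∏ i : Fin n, (if x i then (1 - ε) / 2 else (1 + ε) / 2))
      = reachG ε ρ n K := by
    rw [reachG, Finset.sum_filter]
    apply Finset.sum_congr rfl
    intro x _
    congr 1
  rw [hlhs]
  exact reachG_bound ε hε0 hε1 ρ h_nil h_one h_zero n K
end

section
/- Azuma–Hoeffding drift bound for the margin walk: fix ε ∈ (0,1) and let W_1, W_2, ... be {±1}-valued random variables with E[W_{t+1} | W_1,...,W_t] ≤ −ε. Define α = (1+ε)/(2ε) and the coupled process (ρ_t, μ̄_t) by ρ_0 = μ̄_0 = 0 and: if ρ_t > 0 and μ̄_t < 0, both coordinates step by W_{t+1} (with μ̄ clipped above at 0); if ρ_t > 0 and μ̄_t = 0, only ρ steps by W_{t+1}; if ρ_t = 0 and μ̄_t < 0, μ̄ steps by W_{t+1} (clipped at 0) and ρ steps by max(0, W_{t+1}); if ρ_t = μ̄_t = 0, then (ρ_{t+1}, μ̄_{t+1}) = (1,0) if W_{t+1}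 = 1 and (0,−1) if W_{t+1} = −1. Then the potential Φ_t = ρ_t + α·μ̄_t satisfies E[Φ_{t+1} − Φ_t | W_1,...,W_t] ≤ −ε in each of the four cases. -/
/-!
On a history cylinder `{W_s = w_s, s < t}` the state `(ρ_t, μ̄_t)` is constant, because the
recursion is deterministic given the history, and it lies in `ℕ × (-∞, 0]`. Hence the increment
of `Φ` there is a function `D` of the single `±1` variable `W_t`, and such a function is affine:
`D W = (D 1 + D (-1)) / 2 + (D 1 - D (-1)) / 2 * W`. As `D (-1) ≤ D 1`, the drift hypothesis
reduces the claim to the extremal law `P(W_t = 1) = (1 - ε) / 2`, that is to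
`(1 - ε) / 2 * D 1 + (1 + ε) / 2 * D (-1) ≤ -ε`, which is checked state by state. The state
`ρ = 0 > μ̄` is tight exactly when `α * ε = (1 + ε) / 2`; this is where `α` comes from.
-/

open MeasureTheory

theorem setIntegral_comp_le_of_setIntegral_le {Ω : Type*} [MeasurableSpace Ω] {μ : Measure Ω}
    {S : Set Ω} (hS : MeasurableSet S) (hSfin : μ S ≠ ⊤) {X : Ω → ℝ} (hX : Measurable X)
    (hXpm : ∀ ω ∈ S, X ω = 1 ∨ X ω = -1) {ε : ℝ} (hdrift : ∫ ω in S, X ω ∂μ ≤ -ε * μ.real S)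
    {f : ℝ → ℝ} (hmono : f (-1) ≤ f 1) (hf : (1 - ε) / 2 * f 1 + (1 + ε) / 2 * f (-1) ≤ -ε) :
    ∫ ω in S, f (X ω) ∂μ ≤ -ε * μ.real S := by
  set a := (f 1 + f (-1)) / 2
  set b := (f 1 - f (-1)) / 2
  have haffine : Set.EqOn (fun ω => f (X ω)) (fun ω => a + b * X ω) S := by
    intro ω hω
    rcases hXpm ω hω with h | h <;> simp only [h, a, b] <;> ring
  have hXint : IntegrableOn X S μ := by
    refine Measure.integrableOn_of_bounded (M := 1) hSfin hX.aestronglyMeasurable ?_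
    filter_upwards [ae_restrict_mem hS] with ω hω
    rcases hXpm ω hω with h | h <;> simp [h]
  calc ∫ ω in S, f (X ω) ∂μ = a * μ.real S + b * ∫ ω in S, X ω ∂μ := by
        rw [setIntegral_congr_fun hS haffine,
          integral_add (integrableOn_const (C := a) hSfin enorm_ne_top) (hXint.const_mul b),
          integral_const_mul, setIntegral_const, smul_eq_mul, mul_comm]
    _ ≤ a * μ.real S + b * (-ε * μ.real S) := by gcongr
    _ = ((1 - ε) / 2 * f 1 + (1 + ε) / 2 * f (-1)) * μ.real S := by ring
    _ ≤ -ε * μ.real S := by gcongr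

/-- The paper's recursion; for `ρ = 0` one formula covers both `μ̄ < 0` and `μ̄ = 0`. -/
noncomputable def marginStep (p : ℝ × ℝ) (x : ℝ) : ℝ × ℝ :=
  if 0 < p.1 then (p.1 + x, if p.2 < 0 then min 0 (p.2 + x) else p.2)
  else (max 0 x, min 0 (p.2 + x))

noncomputable def potentialIncrement (α : ℝ) (p : ℝ × ℝ) (x : ℝ) : ℝ :=
  ((marginStep p x).1 + α * (marginStep p x).2) - (p.1 + α * p.2)

/-- Integrality of `ρ` is what keeps it nonnegative: a positive `ρ` is at least `1`. -/
def marginStateSpace : Set (ℝ × ℝ) := Set.range ((↑) : ℕ → ℝ) ×ˢ Set.Iic 0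

theorem marginStep_mem_marginStateSpace {p : ℝ × ℝ} {x : ℝ} (hp : p ∈ marginStateSpace)
    (hx : x = 1 ∨ x = -1) : marginStep p x ∈ marginStateSpace := by
  obtain ⟨⟨n, hn⟩, hp₂ : p.2 ≤ 0⟩ := hp
  by_cases hpos : 0 < p.1
  · rw [marginStep, if_pos hpos]
    refine ⟨?_, Set.mem_Iic.2 (by dsimp only; split_ifs <;> simp [hp₂])⟩
    rcases hx with rfl | rfl
    · exact ⟨n + 1, by push_cast [← hn]; ring⟩
    · have hn₁ : 1 ≤ n := by exact_mod_cast (hn ▸ hpos : (0 : ℝ) < n)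
      exact ⟨n - 1, by push_cast [← hn, hn₁]; ring⟩
  · rw [marginStep, if_neg hpos]
    refine ⟨?_, Set.mem_Iic.2 (min_le_left _ _)⟩
    rcases hx with rfl | rfl
    · exact ⟨1, by norm_num⟩
    · exact ⟨0, by norm_num⟩

theorem nonneg_fst_of_mem_marginStateSpace {p : ℝ × ℝ} (hp : p ∈ marginStateSpace) :
    0 ≤ p.1 := by
  obtain ⟨⟨n, hn⟩, -⟩ := hp
  exact hn ▸ n.cast_nonneg

theorem potentialIncrement_neg_one_le_one {α : ℝ} (hα : 0 ≤ α) {p : ℝ × ℝ} (hp₁ : 0 ≤ p.1)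
    (hp₂ : p.2 ≤ 0) : potentialIncrement α p (-1) ≤ potentialIncrement α p 1 := by
  obtain ⟨r, m⟩ := p
  have hlo : m ≤ min 0 (m + 1) := le_min hp₂ (by linarith)
  have hdown : min 0 (m + -1) = m - 1 := min_eq_right (by linarith)
  simp only at hp₁ hp₂
  unfold potentialIncrement marginStep
  split_ifs <;> simp only [hdown] <;> norm_num <;> nlinarith

theorem potentialIncrement_avg_le {ε α : ℝ} (hε : ε ≤ 1) (hα : 1 ≤ α)
    (hαε : (1 + ε) / 2 ≤ α * ε) {p : ℝ × ℝ} (hp₁ : 0 ≤ p.1) (hp₂ : p.2 ≤ 0) :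
    (1 - ε) / 2 * potentialIncrement α p 1 + (1 + ε) / 2 * potentialIncrement α p (-1) ≤ -ε := by
  obtain ⟨r, m⟩ := p
  have hhi : min 0 (m + 1) ≤ m + 1 := min_le_right _ _
  have hdown : min 0 (m + -1) = m - 1 := min_eq_right (by linarith)
  have hαε₀ : 0 ≤ α * ε := by nlinarith
  have hclip : 0 ≤ (1 - ε) * α * (m + 1 - min 0 (m + 1)) :=
    mul_nonneg (mul_nonneg (sub_nonneg.2 hε) (by linarith)) (sub_nonneg.2 hhi)
  simp only at hp₁ hp₂
  unfold potentialIncrement marginStep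
  split_ifs <;> simp only [hdown] <;> norm_num <;> nlinarith

structure MarginPath (w r m : ℕ → ℝ) : Prop where
  sign : ∀ t, w t = 1 ∨ w t = -1
  init : r 0 = 0 ∧ m 0 = 0
  step_pos_neg : ∀ t, 0 < r t → m t < 0 →
    r (t + 1) = r t + w t ∧ m (t + 1) = min 0 (m t + w t)
  step_pos_zero : ∀ t, 0 < r t → m t = 0 → r (t + 1) = r t + w t ∧ m (t + 1) = m t
  step_zero_neg : ∀ t, r t = 0 → m t < 0 →
    r (t + 1) = max 0 (w t) ∧ m (t + 1) = min 0 (m t + w t)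
  step_zero_zero : ∀ t, r t = 0 → m t = 0 →
    (w t = 1 → r (t + 1) = 1 ∧ m (t + 1) = 0) ∧ (w t = -1 → r (t + 1) = 0 ∧ m (t + 1) = -1)

namespace MarginPath

variable {w r m : ℕ → ℝ}

theorem succ_eq_marginStep_of_nonneg (h : MarginPath w r m) (t : ℕ) (hr : 0 ≤ r t)
    (hm : m t ≤ 0) : (r (t + 1), m (t + 1)) = marginStep (r t, m t) (w t) := by
  rcases hr.lt_or_eq with hr | hr <;> rcases hm.lt_or_eq with hm | hm
  · obtain ⟨h₁, h₂⟩ := h.step_pos_neg t hr hm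
    simp [marginStep, hr, hm, h₁, h₂]
  · obtain ⟨h₁, h₂⟩ := h.step_pos_zero t hr hm
    simp [marginStep, hr, hm, h₁, h₂]
  · obtain ⟨h₁, h₂⟩ := h.step_zero_neg t hr.symm hm
    simp [marginStep, ← hr, h₁, h₂]
  · obtain ⟨hup, hdown⟩ := h.step_zero_zero t hr.symm hm
    rcases h.sign t with hw | hw
    · simp [marginStep, ← hr, hm, hw, hup hw]
    · simp [marginStep, ← hr, hm, hw, hdown hw]

theorem mem_marginStateSpace (h : MarginPath w r m) (t : ℕ) : (r t, m t) ∈ marginStateSpace := by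
  induction t with
  | zero => exact ⟨⟨0, by simp [h.init.1]⟩, show m 0 ≤ 0 from h.init.2.le⟩
  | succ t ih =>
    rw [h.succ_eq_marginStep_of_nonneg t (nonneg_fst_of_mem_marginStateSpace ih) ih.2]
    exact marginStep_mem_marginStateSpace ih (h.sign t)

theorem succ_eq_marginStep (h : MarginPath w r m) (t : ℕ) :
    (r (t + 1), m (t + 1)) = marginStep (r t, m t) (w t) :=
  h.succ_eq_marginStep_of_nonneg t (nonneg_fst_of_mem_marginStateSpace (h.mem_marginStateSpace t))
    (h.mem_marginStateSpace t).2

theorem state_eq_of_forall_lt_eq {w' r' m' : ℕ → ℝ} (h : MarginPath w r m)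
    (h' : MarginPath w' r' m') {t : ℕ} (hw : ∀ s < t, w s = w' s) : (r t, m t) = (r' t, m' t) := by
  induction t with
  | zero => simp [h.init, h'.init]
  | succ t ih =>
    rw [h.succ_eq_marginStep, h'.succ_eq_marginStep, ih (fun s hs => hw s (by omega)),
      hw t t.lt_succ_self]

end MarginPath

/-- Per-step drift bound for the potential `Φ_t = ρ_t + α·μ̄_t` of the coupled
reach/margin walk driven by `±1`-valued variables with conditional drift `≤ −ε`:
conditioned on any history, `E[Φ_{t+1} − Φ_t] ≤ −ε`. -/
theorem potential_drift_bound
    {Ω : Type*} [MeasurableSpace Ω] (μ : Measure Ω) [IsProbabilityMeasure μ]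
    (ε : ℝ) (hε0 : 0 < ε) (hε1 : ε < 1)
    (α : ℝ) (hα : α = (1 + ε) / (2 * ε))
    (W : ℕ → Ω → ℝ)
    (hWmeas : ∀ t, Measurable (W t))
    (hWpm : ∀ t ω, W t ω = 1 ∨ W t ω = -1)
    (hdrift : ∀ (t : ℕ) (w : ℕ → ℝ),
      (∫ ω in {ω | ∀ s < t, W s ω = w s}, W t ω ∂μ)
        ≤ -ε * (μ {ω | ∀ s < t, W s ω = w s}).toReal)
    (ρ μb : ℕ → Ω → ℝ)
    (hinit : ∀ ω, ρ 0 ω = 0 ∧ μb 0 ω = 0)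
    (hcase1 : ∀ t ω, 0 < ρ t ω → μb t ω < 0 →
      ρ (t + 1) ω = ρ t ω + W t ω ∧ μb (t + 1) ω = min 0 (μb t ω + W t ω))
    (hcase2 : ∀ t ω, 0 < ρ t ω → μb t ω = 0 →
      ρ (t + 1) ω = ρ t ω + W t ω ∧ μb (t + 1) ω = μb t ω)
    (hcase3 : ∀ t ω, ρ t ω = 0 → μb t ω < 0 →
      ρ (t + 1) ω = max 0 (W t ω) ∧ μb (t + 1) ω = min 0 (μb t ω + W t ω))
    (hcase4 : ∀ t ω, ρ t ω = 0 → μb t ω = 0 →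
      (W t ω = 1 → ρ (t + 1) ω = 1 ∧ μb (t + 1) ω = 0) ∧
      (W t ω = -1 → ρ (t + 1) ω = 0 ∧ μb (t + 1) ω = -1)) :
    ∀ (t : ℕ) (w : ℕ → ℝ),
      (∫ ω in {ω | ∀ s < t, W s ω = w s},
          ((ρ (t + 1) ω + α * μb (t + 1) ω) - (ρ t ω + α * μb t ω)) ∂μ)
        ≤ -ε * (μ {ω | ∀ s < t, W s ω = w s}).toReal := by
  intro t w
  have hpath (ω : Ω) : MarginPath (W · ω) (ρ · ω) (μb · ω) :=
    ⟨fun t => hWpm t ω, hinit ω, fun t => hcase1 t ω, fun t => hcase2 t ω,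
      fun t => hcase3 t ω, fun t => hcase4 t ω⟩
  set S := {ω | ∀ s < t, W s ω = w s}
  have hS : MeasurableSet S := by
    simp only [S, Set.ofPred_forall]
    exact .iInter fun s => .iInter fun _ => hWmeas s (measurableSet_singleton _)
  rcases S.eq_empty_or_nonempty with hempty | ⟨ω₀, hω₀⟩
  · simp [hempty]
  set p := (ρ t ω₀, μb t ω₀)
  have hincr : Set.EqOn (fun ω => (ρ (t + 1) ω + α * μb (t + 1) ω) - (ρ t ω + α * μb t ω))
      (fun ω => potentialIncrement α p (W t ω)) S := fun ω hω => by
    have hstate : (ρ t ω, μb t ω) = p :=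
      (hpath ω).state_eq_of_forall_lt_eq (hpath ω₀) fun s hs => (hω s hs).trans (hω₀ s hs).symm
    simp only [potentialIncrement, ← hstate, ← (hpath ω).succ_eq_marginStep]
  have hp := (hpath ω₀).mem_marginStateSpace t
  have hp₁ := nonneg_fst_of_mem_marginStateSpace hp
  have hαε : (1 + ε) / 2 = α * ε := by rw [hα]; field_simp
  have hα1 : 1 ≤ α := by rw [hα, le_div_iff₀ (by linarith)]; linarith
  rw [setIntegral_congr_fun hS hincr]
  exact setIntegral_comp_le_of_setIntegral_le hS (measure_ne_top μ S) (hWmeas t)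
    (fun ω _ => hWpm t ω) (hdrift t w) (potentialIncrement_neg_one_le_one (by linarith) hp₁ hp.2)
    (potentialIncrement_avg_le hε1.le hα1 hαε.le hp₁ hp.2)
end
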